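/- arXiv:1009.0678 — 6 statements merged into one kernel-verified Lean document; each statement's English description precedes it below -/
import Mathlib

section
/- The shuffle product P ⋆ Q = Σ_{w ∈ Sh_{r,s}} w( ∏_{1≤i≤r < j ≤ r+s} g(x_i/x_j) · P(x_1,…,x_r) Q(x_{r+1},…,x_{r+s}) ) on the graded space of symmetric rational functions ⊕_r C(x_1,…,x_r)^{S_r} is associative. -/
open Finset

/-- The set of `(r,s)`-shuffles in `S_{r+s}`: permutations increasing on the
first `r` letters and on the last `s` letters. -/
def Sh (r s : ℕ) : Finset (Equiv.Perm (Fin (r + s))) :=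
  Finset.univ.filter fun w =>
    (∀ i j : Fin r, i < j → w (Fin.castAdd s i) < w (Fin.castAdd s j)) ∧
    (∀ i j : Fin s, i < j → w (Fin.natAdd r i) < w (Fin.natAdd r j))

/-- The shuffle product associated to a rational function `g`:
`P ⋆ Q = Σ_{w ∈ Sh_{r,s}} w( ∏_{i ≤ r < j} g(x_i/x_j) · P(x_1,…,x_r)
Q(x_{r+1},…,x_{r+s}) )`.  (Rational functions in `n` variables are modelled as
`ℂ`-valued functions of `n` complex variables.) -/
noncomputable def shuffleMul (g : ℂ → ℂ) {r s : ℕ}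
    (P : (Fin r → ℂ) → ℂ) (Q : (Fin s → ℂ) → ℂ) : (Fin (r + s) → ℂ) → ℂ :=
  fun x => ∑ w ∈ Sh r s,
    (∏ i : Fin r, ∏ j : Fin s,
        g (x (w (Fin.castAdd s i)) / x (w (Fin.natAdd r j)))) *
      P (fun i => x (w (Fin.castAdd s i))) * Q (fun j => x (w (Fin.natAdd r j)))

/-!
For symmetric `P` and `Q`, summing the summand of `P ⋆ Q` over all of `S_{r+s}` instead of over
the shuffles multiplies the result by `r! s!`: every permutation is uniquely a shuffle followed by
a permutation of the two blocks (sort each block), and the summand is invariant under the latter.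
Hence both `(P ⋆ Q) ⋆ R` and `P ⋆ (Q ⋆ R)` equal `(r! s! t!)⁻¹` times the full symmetrization of
one and the same function of `r + s + t` variables, namely `P · Q · R` times `g(x_i / x_j)` over
all pairs `i, j` lying in different blocks with the block of `i` coming first.
-/

open Equiv
open scoped Nat

theorem Tuple.eq_sort_of_strictMono {n : ℕ} {α : Type*} [LinearOrder α] {f : Fin n → α}
    {σ : Perm (Fin n)} (h : StrictMono (f ∘ σ)) : σ = Tuple.sort f :=
  Tuple.eq_sort_iff.2 ⟨h.monotone, fun _ _ hij heq => absurd heq (h hij).ne⟩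

namespace ShuffleAlgebra

variable {r s : ℕ}

def blockPerm (a : Perm (Fin r)) (b : Perm (Fin s)) : Perm (Fin (r + s)) :=
  finSumFinEquiv.permCongr (a.sumCongr b)

@[simp]
lemma blockPerm_castAdd (a : Perm (Fin r)) (b : Perm (Fin s)) (i : Fin r) :
    blockPerm a b (Fin.castAdd s i) = Fin.castAdd s (a i) := by
  simp [blockPerm]

@[simp]
lemma blockPerm_natAdd (a : Perm (Fin r)) (b : Perm (Fin s)) (j : Fin s) :
    blockPerm a b (Fin.natAdd r j) = Fin.natAdd r (b j) := by
  simp [blockPerm]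

lemma blockPerm_mul (a a' : Perm (Fin r)) (b b' : Perm (Fin s)) :
    blockPerm a b * blockPerm a' b' = blockPerm (a * a') (b * b') := by
  ext k
  refine Fin.addCases (fun i => ?_) (fun j => ?_) k <;> simp

@[simp]
lemma blockPerm_one : blockPerm (1 : Perm (Fin r)) (1 : Perm (Fin s)) = 1 := by
  ext k
  refine Fin.addCases (fun i => ?_) (fun j => ?_) k <;> simp

lemma mem_Sh {w : Perm (Fin (r + s))} :
    w ∈ Sh r s ↔ StrictMono (fun i => w (Fin.castAdd s i)) ∧
      StrictMono (fun j => w (Fin.natAdd r j)) := by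
  simp [Sh, StrictMono]

lemma sort_shuffle_castAdd_comp {v : Perm (Fin (r + s))} (hv : v ∈ Sh r s)
    (a : Perm (Fin r)) :
    Tuple.sort (fun i => v (Fin.castAdd s (a i))) = a⁻¹ :=
  (Tuple.eq_sort_of_strictMono (by simpa [Function.comp_def] using (mem_Sh.1 hv).1)).symm

lemma sort_shuffle_natAdd_comp {v : Perm (Fin (r + s))} (hv : v ∈ Sh r s)
    (b : Perm (Fin s)) :
    Tuple.sort (fun j => v (Fin.natAdd r (b j))) = b⁻¹ :=
  (Tuple.eq_sort_of_strictMono (by simpa [Function.comp_def] using (mem_Sh.1 hv).2)).symm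

lemma mul_blockPerm_sort_mem_Sh (w : Perm (Fin (r + s))) :
    w * blockPerm (Tuple.sort fun i => w (Fin.castAdd s i))
      (Tuple.sort fun j => w (Fin.natAdd r j)) ∈ Sh r s := by
  have hmono {n : ℕ} (f : Fin n → Fin (r + s)) (hf : f.Injective) :
      StrictMono (f ∘ Tuple.sort f) :=
    (Tuple.monotone_sort f).strictMono_of_injective (hf.comp (Tuple.sort f).injective)
  have h₁ := hmono (fun i => w (Fin.castAdd s i)) (w.injective.comp (Fin.castAdd_injective r s))
  have h₂ := hmono (fun j => w (Fin.natAdd r j)) (w.injective.comp (Fin.natAdd_injective s r))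
  exact mem_Sh.2 ⟨by simpa [Perm.mul_apply, Function.comp_def] using h₁,
    by simpa [Perm.mul_apply, Function.comp_def] using h₂⟩

lemma sum_perm_eq_sum_Sh {M : Type*} [AddCommMonoid M] (f : Perm (Fin (r + s)) → M) :
    ∑ w, f w = ∑ v ∈ Sh r s, ∑ a : Perm (Fin r), ∑ b : Perm (Fin s), f (v * blockPerm a b) := by
  trans ∑ p ∈ Sh r s ×ˢ (univ ×ˢ univ), f (p.1 * blockPerm p.2.1 p.2.2)
  swap
  · simp only [Finset.sum_product]
  refine Finset.sum_nbij' (fun w => (w * blockPerm (Tuple.sort fun i => w (Fin.castAdd s i))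
      (Tuple.sort fun j => w (Fin.natAdd r j)),
      (Tuple.sort fun i => w (Fin.castAdd s i))⁻¹, (Tuple.sort fun j => w (Fin.natAdd r j))⁻¹))
    (fun p => p.1 * blockPerm p.2.1 p.2.2) ?_ ?_ ?_ ?_ ?_
  · intro w _
    simpa [Finset.mem_product] using mul_blockPerm_sort_mem_Sh w
  · intro _ _
    exact Finset.mem_coe.2 (Finset.mem_univ _)
  · intro w _
    simp [mul_assoc, blockPerm_mul]
  · rintro ⟨v, a, b⟩ hp
    have hv : v ∈ Sh r s := (Finset.mem_product.1 hp).1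
    simp only [Perm.mul_apply, blockPerm_castAdd, blockPerm_natAdd]
    rw [sort_shuffle_castAdd_comp hv, sort_shuffle_natAdd_comp hv]
    simp [mul_assoc, blockPerm_mul]
  · intro w _
    simp [mul_assoc, blockPerm_mul]

section Symmetrize

variable {α M : Type*} {n : ℕ}

def IsSymmetric {β : Type*} (F : (Fin n → α) → β) : Prop :=
  ∀ (σ : Perm (Fin n)) (x : Fin n → α), F (x ∘ σ) = F x

variable [AddCommMonoid M]

def symmetrize (F : (Fin n → α) → M) (x : Fin n → α) : M :=
  ∑ σ : Perm (Fin n), F (x ∘ σ)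

lemma isSymmetric_symmetrize (F : (Fin n → α) → M) : IsSymmetric (symmetrize F) := fun τ _ =>
  Fintype.sum_equiv (Equiv.mulLeft τ) _ _ fun _ => rfl

lemma symmetrize_comp_perm (F : (Fin n → α) → M) (τ : Perm (Fin n)) :
    symmetrize (fun y => F (y ∘ τ)) = symmetrize F :=
  funext fun _ => Fintype.sum_equiv (Equiv.mulRight τ) _ _ fun _ => rfl

lemma symmetrize_sum_comp_perm {ι : Type*} [Fintype ι] (F : (Fin n → α) → M)
    (τ : ι → Perm (Fin n)) (x : Fin n → α) :
    symmetrize (fun y => ∑ i, F (y ∘ τ i)) x = Fintype.card ι • symmetrize F x := by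
  calc symmetrize (fun y => ∑ i, F (y ∘ τ i)) x
      = ∑ i, symmetrize (fun y => F (y ∘ τ i)) x := Finset.sum_comm
    _ = Fintype.card ι • symmetrize F x := by simp [symmetrize_comp_perm]

lemma symmetrize_const_mul {R : Type*} [NonUnitalNonAssocSemiring R] (c : R)
    (F : (Fin n → α) → R) : symmetrize (fun y => c * F y) = fun x => c * symmetrize F x :=
  funext fun _ => (Finset.mul_sum _ _ _).symm

lemma symmetrize_comp_cast {m : ℕ} (h : n = m) (F : (Fin n → α) → M) (x : Fin m → α) :
    symmetrize F (x ∘ Fin.cast h) = symmetrize (fun y => F (y ∘ Fin.cast h)) x := by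
  subst h
  rfl

end Symmetrize

section Kernel

variable {K : Type*} [Field K] (g : K → K) {r s t : ℕ}

def crossFactor (u : Fin r → K) (v : Fin s → K) : K :=
  ∏ i, ∏ j, g (u i / v j)

lemma crossFactor_comp_perm_left (u : Fin r → K) (v : Fin s → K) (σ : Perm (Fin r)) :
    crossFactor g (fun i => u (σ i)) v = crossFactor g u v :=
  Equiv.prod_comp σ fun i => ∏ j, g (u i / v j)

lemma crossFactor_comp_perm_right (u : Fin r → K) (v : Fin s → K) (σ : Perm (Fin s)) :
    crossFactor g u (fun j => v (σ j)) = crossFactor g u v :=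
  Finset.prod_congr rfl fun i _ => Equiv.prod_comp σ fun j => g (u i / v j)

lemma crossFactor_add_left (u : Fin (r + s) → K) (v : Fin t → K) :
    crossFactor g u v =
      crossFactor g (fun i => u (Fin.castAdd s i)) v *
        crossFactor g (fun j => u (Fin.natAdd r j)) v :=
  Fin.prod_univ_add _

lemma crossFactor_add_right (u : Fin r → K) (v : Fin (s + t) → K) :
    crossFactor g u v =
      crossFactor g u (fun j => v (Fin.castAdd t j)) *
        crossFactor g u (fun k => v (Fin.natAdd s k)) := by
  simp only [crossFactor, Fin.prod_univ_add, Finset.prod_mul_distrib]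

def shuffleKernel (P : (Fin r → K) → K) (Q : (Fin s → K) → K) (x : Fin (r + s) → K) : K :=
  crossFactor g (fun i => x (Fin.castAdd s i)) (fun j => x (Fin.natAdd r j)) *
    P (fun i => x (Fin.castAdd s i)) * Q (fun j => x (Fin.natAdd r j))

lemma shuffleKernel_comp_blockPerm {P : (Fin r → K) → K} {Q : (Fin s → K) → K}
    (hP : IsSymmetric P) (hQ : IsSymmetric Q) (x : Fin (r + s) → K)
    (a : Perm (Fin r)) (b : Perm (Fin s)) :
    shuffleKernel g P Q (x ∘ blockPerm a b) = shuffleKernel g P Q x := by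
  have hPa : P (fun i => x (Fin.castAdd s (a i))) = P (fun i => x (Fin.castAdd s i)) :=
    hP a fun i => x (Fin.castAdd s i)
  have hQb : Q (fun j => x (Fin.natAdd r (b j))) = Q (fun j => x (Fin.natAdd r j)) :=
    hQ b fun j => x (Fin.natAdd r j)
  simp only [shuffleKernel, Function.comp_apply, blockPerm_castAdd, blockPerm_natAdd,
    crossFactor_comp_perm_left g (fun i => x (Fin.castAdd s i)) _ a,
    crossFactor_comp_perm_right g _ (fun j => x (Fin.natAdd r j)) b, hPa, hQb]

lemma shuffleKernel_symmetrize_left (F : (Fin r → K) → K) (R : (Fin t → K) → K) :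
    shuffleKernel g (symmetrize F) R =
      fun x => ∑ u : Perm (Fin r), shuffleKernel g F R (x ∘ blockPerm u 1) := by
  funext x
  simp only [shuffleKernel, symmetrize, Function.comp_apply, blockPerm_castAdd, blockPerm_natAdd,
    Perm.one_apply, Finset.mul_sum, Finset.sum_mul]
  refine Finset.sum_congr rfl fun u _ => ?_
  rw [crossFactor_comp_perm_left g (fun i => x (Fin.castAdd t i)) _ u]
  rfl

lemma shuffleKernel_symmetrize_right (P : (Fin r → K) → K) (F : (Fin s → K) → K) :
    shuffleKernel g P (symmetrize F) =
      fun x => ∑ u : Perm (Fin s), shuffleKernel g P F (x ∘ blockPerm 1 u) := by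
  funext x
  simp only [shuffleKernel, symmetrize, Function.comp_apply, blockPerm_castAdd, blockPerm_natAdd,
    Perm.one_apply, Finset.mul_sum]
  refine Finset.sum_congr rfl fun u _ => ?_
  rw [crossFactor_comp_perm_right g _ (fun j => x (Fin.natAdd r j)) u]
  rfl

lemma shuffleKernel_const_mul_left (c : K) (F : (Fin r → K) → K) (R : (Fin t → K) → K) :
    shuffleKernel g (fun y => c * F y) R = fun x => c * shuffleKernel g F R x := by
  funext x
  simp only [shuffleKernel]
  ring

lemma shuffleKernel_const_mul_right (c : K) (P : (Fin r → K) → K) (F : (Fin s → K) → K) :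
    shuffleKernel g P (fun y => c * F y) = fun x => c * shuffleKernel g P F x := by
  funext x
  simp only [shuffleKernel]
  ring

lemma shuffleKernel_assoc (P : (Fin r → K) → K) (Q : (Fin s → K) → K) (R : (Fin t → K) → K)
    (x : Fin (r + s + t) → K) :
    shuffleKernel g (shuffleKernel g P Q) R x =
      shuffleKernel g P (shuffleKernel g Q R) (x ∘ Fin.cast (Nat.add_assoc r s t).symm) := by
  have e₁ : (fun i => x (Fin.cast (Nat.add_assoc r s t).symm (Fin.castAdd (s + t) i))) =
      fun i => x (Fin.castAdd t (Fin.castAdd s i)) := rfl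
  have e₂ : (fun j => x (Fin.cast (Nat.add_assoc r s t).symm (Fin.natAdd r (Fin.castAdd t j)))) =
      fun j => x (Fin.castAdd t (Fin.natAdd r j)) := rfl
  have e₃ : (fun k => x (Fin.cast (Nat.add_assoc r s t).symm (Fin.natAdd r (Fin.natAdd s k)))) =
      fun k => x (Fin.natAdd (r + s) k) :=
    funext fun k => congrArg x (Fin.ext (by simp [Nat.add_assoc]))
  simp only [shuffleKernel, Function.comp_apply]
  rw [crossFactor_add_left g (fun i => x (Fin.castAdd t i)),
    crossFactor_add_right g _ (fun j => x (Fin.cast (Nat.add_assoc r s t).symm (Fin.natAdd r j)))]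
  simp only [e₁, e₂, e₃]
  ring

lemma symmetrize_shuffleKernel_symmetrize_left (F : (Fin r → K) → K) (R : (Fin t → K) → K) :
    symmetrize (shuffleKernel g (symmetrize F) R) =
      fun x => (r ! : K) * symmetrize (shuffleKernel g F R) x := by
  funext x
  rw [shuffleKernel_symmetrize_left, symmetrize_sum_comp_perm, Fintype.card_perm,
    Fintype.card_fin, nsmul_eq_mul]

lemma symmetrize_shuffleKernel_symmetrize_right (P : (Fin r → K) → K) (F : (Fin s → K) → K) :
    symmetrize (shuffleKernel g P (symmetrize F)) =
      fun x => (s ! : K) * symmetrize (shuffleKernel g P F) x := by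
  funext x
  rw [shuffleKernel_symmetrize_right, symmetrize_sum_comp_perm, Fintype.card_perm,
    Fintype.card_fin, nsmul_eq_mul]

end Kernel

section ShuffleMul

variable (g : ℂ → ℂ) {r s t : ℕ} {P : (Fin r → ℂ) → ℂ} {Q : (Fin s → ℂ) → ℂ}
  {R : (Fin t → ℂ) → ℂ}

lemma symmetrize_shuffleKernel (hP : IsSymmetric P) (hQ : IsSymmetric Q) (x : Fin (r + s) → ℂ) :
    symmetrize (shuffleKernel g P Q) x = (r ! * s ! : ℂ) * shuffleMul g P Q x := by
  have hx (v : Perm (Fin (r + s))) (a : Perm (Fin r)) (b : Perm (Fin s)) :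
      shuffleKernel g P Q (x ∘ ⇑(v * blockPerm a b)) = shuffleKernel g P Q (x ∘ v) :=
    shuffleKernel_comp_blockPerm g hP hQ (x ∘ v) a b
  simp only [symmetrize, sum_perm_eq_sum_Sh, hx, Finset.sum_const, Finset.card_univ,
    Fintype.card_perm, Fintype.card_fin, nsmul_eq_mul, ← mul_assoc]
  rw [← Finset.mul_sum]
  -- `shuffleMul g P Q x` unfolds to `∑ w ∈ Sh r s, shuffleKernel g P Q (x ∘ w)`
  rfl

lemma shuffleMul_eq_symmetrize (hP : IsSymmetric P) (hQ : IsSymmetric Q) :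
    shuffleMul g P Q = fun x => (r ! * s ! : ℂ)⁻¹ * symmetrize (shuffleKernel g P Q) x := by
  funext x
  rw [symmetrize_shuffleKernel g hP hQ, inv_mul_cancel_left₀ (by simp [Nat.factorial_ne_zero])]

lemma isSymmetric_shuffleMul (hP : IsSymmetric P) (hQ : IsSymmetric Q) :
    IsSymmetric (shuffleMul g P Q) := fun σ x => by
  simp only [shuffleMul_eq_symmetrize g hP hQ, isSymmetric_symmetrize _ σ x]

lemma shuffleMul_shuffleMul_left (hP : IsSymmetric P) (hQ : IsSymmetric Q) (hR : IsSymmetric R) :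
    shuffleMul g (shuffleMul g P Q) R =
      fun x => (r ! * s ! * t ! : ℂ)⁻¹ * symmetrize (shuffleKernel g (shuffleKernel g P Q) R) x := by
  rw [shuffleMul_eq_symmetrize g (isSymmetric_shuffleMul g hP hQ) hR,
    shuffleMul_eq_symmetrize g hP hQ, shuffleKernel_const_mul_left, symmetrize_const_mul,
    symmetrize_shuffleKernel_symmetrize_left]
  have : ((r + s)! : ℂ) ≠ 0 := by simp [Nat.factorial_ne_zero]
  funext x
  field_simp

lemma shuffleMul_shuffleMul_right (hP : IsSymmetric P) (hQ : IsSymmetric Q) (hR : IsSymmetric R) :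
    shuffleMul g P (shuffleMul g Q R) =
      fun x => (r ! * s ! * t ! : ℂ)⁻¹ * symmetrize (shuffleKernel g P (shuffleKernel g Q R)) x := by
  rw [shuffleMul_eq_symmetrize g hP (isSymmetric_shuffleMul g hQ hR),
    shuffleMul_eq_symmetrize g hQ hR, shuffleKernel_const_mul_right, symmetrize_const_mul,
    symmetrize_shuffleKernel_symmetrize_right]
  have : ((s + t)! : ℂ) ≠ 0 := by simp [Nat.factorial_ne_zero]
  funext x
  field_simp

end ShuffleMul

end ShuffleAlgebra

open ShuffleAlgebra

/-- **Associativity of the shuffle product** on the graded space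
`⊕_r ℂ(x_1,…,x_r)^{S_r}` of symmetric rational functions. -/
theorem stmt2 (g : ℂ → ℂ) (r s t : ℕ)
    (P : (Fin r → ℂ) → ℂ) (Q : (Fin s → ℂ) → ℂ) (R : (Fin t → ℂ) → ℂ)
    (hP : ∀ (σ : Equiv.Perm (Fin r)) (x : Fin r → ℂ), P (x ∘ σ) = P x)
    (hQ : ∀ (σ : Equiv.Perm (Fin s)) (x : Fin s → ℂ), Q (x ∘ σ) = Q x)
    (hR : ∀ (σ : Equiv.Perm (Fin t)) (x : Fin t → ℂ), R (x ∘ σ) = R x)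
    (x : Fin (r + s + t) → ℂ) :
    shuffleMul g (shuffleMul g P Q) R x =
      shuffleMul g P (shuffleMul g Q R)
        (fun i => x (Fin.cast (Nat.add_assoc r s t).symm i)) := by
  rw [shuffleMul_shuffleMul_left g hP hQ hR, shuffleMul_shuffleMul_right g hP hQ hR]
  show _ = _ * symmetrize _ (x ∘ Fin.cast (Nat.add_assoc r s t).symm)
  rw [symmetrize_comp_cast]
  simp only [← shuffleKernel_assoc]
end

section
/- The weighted symmetrization Ψ_r(P) = Σ_{σ∈S_r} σ( ∏_{i<j} g(x_i/x_j) · P ), applied to Laurent polynomials, satisfies Ψ_{r+s}(P(x_1,…,x_r)Q(x_{r+1},…,x_{r+s})) = Ψ_r(P) ⋆ Ψ_s(Q), where ⋆ is the shuffle product associated to g. -/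
/-
Every `π ∈ S_{r+s}` factors uniquely as `π = w ∘ (σ × τ)` with `w` an `(r,s)`-shuffle: sorting
the values of `π` on the two blocks produces `σ` and `τ`. For `y = x ∘ π` the weight
`∏_{a<b} g(y_a/y_b)` is the product of the weights of the two blocks, which are those of `σ` and
`τ` at the variables `x ∘ w`, and of the cross weight `∏_{i ≤ r < j} g(y_i/y_j)`, which depends
only on `w`. Summing over `σ` and `τ` for fixed `w` therefore gives the `w`-term of
`Ψ_r(P) ⋆ Ψ_s(Q)`.
-/

open Finset

/-- The weighted symmetrization `Ψ_r(P) = Σ_{σ ∈ S_r} σ(∏_{i<j} g(x_i/x_j) · P)`. -/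
noncomputable def Psi (g : ℂ → ℂ) {r : ℕ} (P : (Fin r → ℂ) → ℂ) :
    (Fin r → ℂ) → ℂ :=
  fun x => ∑ σ : Equiv.Perm (Fin r),
    (∏ p ∈ Finset.univ.filter (fun p : Fin r × Fin r => p.1 < p.2),
        g (x (σ p.1) / x (σ p.2))) * P (x ∘ σ)

open Equiv Function

namespace Tuple

variable {n : ℕ} {α : Type*} [LinearOrder α] {f : Fin n → α}

theorem strictMono_comp_sort (hf : Injective f) : StrictMono (f ∘ sort f) :=
  (monotone_sort f).strictMono_of_injective (hf.comp (sort f).injective)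

theorem sort_comp_perm_of_strictMono (hf : StrictMono f) (σ : Perm (Fin n)) :
    sort (f ∘ σ) = σ⁻¹ := by
  refine (eq_sort_iff.2 ⟨by simpa [Function.comp_assoc] using hf.monotone, ?_⟩).symm
  exact fun _ _ hij he => absurd (σ⁻¹.injective ((hf.injective.comp σ.injective) he)) hij.ne

end Tuple

theorem Fin.castAdd_lt_natAdd {r s : ℕ} (i : Fin r) (j : Fin s) :
    Fin.castAdd s i < Fin.natAdd r j := by
  simp only [Fin.lt_def, Fin.val_castAdd, Fin.val_natAdd]
  omega

section Shuffle

variable {r s : ℕ}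

def blockPerm (σ : Perm (Fin r)) (τ : Perm (Fin s)) : Perm (Fin (r + s)) :=
  finSumFinEquiv.permCongr (Perm.sumCongr σ τ)

@[simp] theorem blockPerm_castAdd (σ : Perm (Fin r)) (τ : Perm (Fin s)) (i : Fin r) :
    blockPerm σ τ (Fin.castAdd s i) = Fin.castAdd s (σ i) := by
  simp [blockPerm]

@[simp] theorem blockPerm_natAdd (σ : Perm (Fin r)) (τ : Perm (Fin s)) (j : Fin s) :
    blockPerm σ τ (Fin.natAdd r j) = Fin.natAdd r (τ j) := by
  simp [blockPerm]

theorem blockPerm_inv (σ : Perm (Fin r)) (τ : Perm (Fin s)) :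
    (blockPerm σ τ)⁻¹ = blockPerm σ⁻¹ τ⁻¹ := by
  rw [inv_eq_iff_mul_eq_one]
  ext p
  induction p using Fin.addCases <;> simp

theorem mem_Sh {w : Perm (Fin (r + s))} :
    w ∈ Sh r s ↔ StrictMono (w ∘ Fin.castAdd s) ∧ StrictMono (w ∘ Fin.natAdd r) := by
  simp [Sh, StrictMono]

theorem blockPerm_comp_castAdd (σ : Perm (Fin r)) (τ : Perm (Fin s)) :
    ⇑(blockPerm σ τ) ∘ Fin.castAdd s = Fin.castAdd s ∘ σ := by
  ext1 i; simp

theorem blockPerm_comp_natAdd (σ : Perm (Fin r)) (τ : Perm (Fin s)) :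
    ⇑(blockPerm σ τ) ∘ Fin.natAdd r = Fin.natAdd r ∘ τ := by
  ext1 j; simp

theorem mul_blockPerm_comp_castAdd (w : Perm (Fin (r + s))) (σ : Perm (Fin r)) (τ : Perm (Fin s)) :
    ⇑(w * blockPerm σ τ) ∘ Fin.castAdd s = (w ∘ Fin.castAdd s) ∘ σ := by
  rw [Perm.coe_mul, Function.comp_assoc, blockPerm_comp_castAdd, Function.comp_assoc]

theorem mul_blockPerm_comp_natAdd (w : Perm (Fin (r + s))) (σ : Perm (Fin r)) (τ : Perm (Fin s)) :
    ⇑(w * blockPerm σ τ) ∘ Fin.natAdd r = (w ∘ Fin.natAdd r) ∘ τ := by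
  rw [Perm.coe_mul, Function.comp_assoc, blockPerm_comp_natAdd, Function.comp_assoc]

theorem sum_perm_eq_sum_Sh {M : Type*} [AddCommMonoid M] (f : Perm (Fin (r + s)) → M) :
    ∑ π, f π = ∑ w ∈ Sh r s, ∑ σ, ∑ τ, f (w * blockPerm σ τ) := by
  simp_rw [← Finset.sum_product']
  refine Finset.sum_nbij'
    (fun π => (π * blockPerm (Tuple.sort (π ∘ Fin.castAdd s)) (Tuple.sort (π ∘ Fin.natAdd r)),
      (Tuple.sort (π ∘ Fin.castAdd s))⁻¹, (Tuple.sort (π ∘ Fin.natAdd r))⁻¹))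
    (fun q => q.1 * blockPerm q.2.1 q.2.2) ?_ (fun _ _ => mem_univ _) ?_ ?_ ?_
  · intro π _
    simp only [mem_product, mem_univ, and_true, mem_Sh, mul_blockPerm_comp_castAdd,
      mul_blockPerm_comp_natAdd]
    exact ⟨Tuple.strictMono_comp_sort (π.injective.comp (Fin.castAdd_injective r s)),
      Tuple.strictMono_comp_sort (π.injective.comp (Fin.natAdd_injective s r))⟩
  · intro π _
    rw [← blockPerm_inv, mul_inv_cancel_right]
  · rintro ⟨w, σ, τ⟩ h
    obtain ⟨hc, hn⟩ := mem_Sh.1 (mem_product.1 h).1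
    have hσ : Tuple.sort (⇑(w * blockPerm σ τ) ∘ Fin.castAdd s) = σ⁻¹ := by
      rw [mul_blockPerm_comp_castAdd, Tuple.sort_comp_perm_of_strictMono hc]
    have hτ : Tuple.sort (⇑(w * blockPerm σ τ) ∘ Fin.natAdd r) = τ⁻¹ := by
      rw [mul_blockPerm_comp_natAdd, Tuple.sort_comp_perm_of_strictMono hn]
    rw [hσ, hτ, ← blockPerm_inv, mul_inv_cancel_right, inv_inv, inv_inv]
  · intro π _
    rw [← blockPerm_inv, mul_inv_cancel_right]

theorem prod_filter_lt_fin_add {M : Type*} [CommMonoid M] (F : Fin (r + s) → Fin (r + s) → M) :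
    ∏ p ∈ univ.filter (fun p : Fin (r + s) × Fin (r + s) => p.1 < p.2), F p.1 p.2 =
      (∏ p ∈ univ.filter (fun p : Fin r × Fin r => p.1 < p.2),
          F (Fin.castAdd s p.1) (Fin.castAdd s p.2)) *
        (∏ p ∈ univ.filter (fun p : Fin s × Fin s => p.1 < p.2),
          F (Fin.natAdd r p.1) (Fin.natAdd r p.2)) *
        ∏ i : Fin r, ∏ j : Fin s, F (Fin.castAdd s i) (Fin.natAdd r j) := by
  simp only [prod_filter, Fintype.prod_prod_type, Fin.prod_univ_add, prod_mul_distrib,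
    (Fin.strictMono_castAdd s).lt_iff_lt, Fin.natAdd_lt_natAdd_iff, Fin.castAdd_lt_natAdd,
    (Fin.castAdd_lt_natAdd _ _).not_gt, if_true, if_false, prod_const_one, mul_one]
  ac_rfl

end Shuffle

section Weight

variable (g : ℂ → ℂ) {r s : ℕ}

noncomputable def pairWeight {n : ℕ} (y : Fin n → ℂ) : ℂ :=
  ∏ p ∈ univ.filter (fun p : Fin n × Fin n => p.1 < p.2), g (y p.1 / y p.2)

noncomputable def crossWeight (y : Fin (r + s) → ℂ) : ℂ :=
  ∏ i : Fin r, ∏ j : Fin s, g (y (Fin.castAdd s i) / y (Fin.natAdd r j))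

theorem Psi_apply {n : ℕ} (P : (Fin n → ℂ) → ℂ) (x : Fin n → ℂ) :
    Psi g P x = ∑ σ : Perm (Fin n), pairWeight g (x ∘ σ) * P (x ∘ σ) :=
  rfl

theorem shuffleMul_apply (P : (Fin r → ℂ) → ℂ) (Q : (Fin s → ℂ) → ℂ) (x : Fin (r + s) → ℂ) :
    shuffleMul g P Q x = ∑ w ∈ Sh r s,
      crossWeight g (x ∘ w) * P (x ∘ w ∘ Fin.castAdd s) * Q (x ∘ w ∘ Fin.natAdd r) :=
  rfl

theorem pairWeight_fin_add (y : Fin (r + s) → ℂ) :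
    pairWeight g y =
      pairWeight g (y ∘ Fin.castAdd s) * pairWeight g (y ∘ Fin.natAdd r) * crossWeight g y :=
  prod_filter_lt_fin_add fun a b => g (y a / y b)

theorem crossWeight_comp_blockPerm (y : Fin (r + s) → ℂ) (σ : Perm (Fin r)) (τ : Perm (Fin s)) :
    crossWeight g (y ∘ blockPerm σ τ) = crossWeight g y :=
  Fintype.prod_equiv σ _ _ fun i => Fintype.prod_equiv τ _ _ fun j => by simp

theorem pairWeight_comp_mul_blockPerm (y : Fin (r + s) → ℂ) (w : Perm (Fin (r + s)))
    (σ : Perm (Fin r)) (τ : Perm (Fin s)) :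
    pairWeight g (y ∘ ⇑(w * blockPerm σ τ)) = crossWeight g (y ∘ w) *
      pairWeight g ((y ∘ w ∘ Fin.castAdd s) ∘ σ) * pairWeight g ((y ∘ w ∘ Fin.natAdd r) ∘ τ) := by
  rw [pairWeight_fin_add, Perm.coe_mul, ← Function.comp_assoc y, crossWeight_comp_blockPerm]
  simp only [Function.comp_assoc, blockPerm_comp_castAdd, blockPerm_comp_natAdd]
  ring

end Weight

/-- **Compatibility of weighted symmetrization with the shuffle product**:
`Ψ_{r+s}(P(x_1,…,x_r) Q(x_{r+1},…,x_{r+s})) = Ψ_r(P) ⋆ Ψ_s(Q)`. -/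
theorem stmt3 (g : ℂ → ℂ) (r s : ℕ)
    (P : (Fin r → ℂ) → ℂ) (Q : (Fin s → ℂ) → ℂ) (x : Fin (r + s) → ℂ) :
    Psi g (fun y : Fin (r + s) → ℂ =>
        P (fun i => y (Fin.castAdd s i)) * Q (fun j => y (Fin.natAdd r j))) x =
      shuffleMul g (Psi g P) (Psi g Q) x := by
  rw [Psi_apply, shuffleMul_apply, sum_perm_eq_sum_Sh (M := ℂ)]
  refine sum_congr rfl fun w _ => ?_
  rw [Psi_apply, Psi_apply, mul_assoc, sum_mul_sum]
  simp only [mul_sum]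
  refine sum_congr rfl fun σ _ => sum_congr rfl fun τ _ => ?_
  rw [pairWeight_comp_mul_blockPerm]
  simp only [Function.comp_def, Perm.coe_mul, blockPerm_castAdd, blockPerm_natAdd]
  ring
end

section
/- Let B be the r!×r! matrix with rows indexed by σ ∈ S_r and columns by tuples I = (n_1,…,n_r) with 0 ≤ n_i ≤ r−i, and entries b_{σ,I} = (−1)^{ℓ(σ)} σ(x_1^{n_1}⋯x_r^{n_r}) / Δ(x), where Δ(x) = ∏_{i<j}(x_i−x_j). Then det(B) = ± Δ(x)^{−r!/2}. -/
open MvPolynomial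

noncomputable section

/-- The field of rational functions in `x_1, …, x_r` (char 0). -/
abbrev RatFld (r : ℕ) : Type := FractionRing (MvPolynomial (Fin r) ℚ)

/-- The Vandermonde product `Δ(x) = ∏_{i<j} (x_i - x_j)`. -/
def Delta (r : ℕ) : RatFld r :=
  algebraMap (MvPolynomial (Fin r) ℚ) (RatFld r)
    (∏ p ∈ Finset.univ.filter (fun p : Fin r × Fin r => p.1 < p.2),
      (X p.1 - X p.2))

/-- The entry `b_{σ,I} = (-1)^{ℓ(σ)} σ(x_1^{n_1} ⋯ x_r^{n_r}) / Δ(x)`. -/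
def bEntry (r : ℕ) (σ : Equiv.Perm (Fin r)) (I : ∀ i : Fin r, Fin (r - (i : ℕ))) :
    RatFld r :=
  ((Equiv.Perm.sign σ : ℤ) : RatFld r) *
    algebraMap (MvPolynomial (Fin r) ℚ) (RatFld r)
      (∏ i : Fin r, (X (σ i)) ^ ((I i : ℕ))) / Delta r

/-! Multiplying row `σ` by `Δ / sign σ` shows `det B = ± Δ^{-r!} det M` with
`M = (σ(x^I))_{σ, I}`, so it suffices to show `(det M)^2 = Δ^{r!}`; squaring also removes the
dependence on the ordering of the columns. This holds over any commutative ring, by induction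
on `r`: grouping rows by `σ 0 = p` and columns by the first exponent, `M` becomes a
block-diagonal matrix with blocks `M_p` (the matrix for the `r - 1` variables other than `x_p`)
times `V ⊗ 1`, `V` the Vandermonde matrix. Hence `det M = (∏_p det M_p) (det V)^{(r-1)!}`; as
each difference `x_i - x_j` occurs in `r - 2` of the `Δ_p`, the exponents of `Δ` add up to
`(r - 2) (r - 1)! + 2 (r - 1)! = r!`. -/

open Finset Equiv Matrix
open scoped Nat Kronecker

section Vandermonde

variable {R : Type*} [CommRing R]

def vandermondeProd {n : ℕ} (y : Fin n → R) : R :=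
  ∏ q ∈ univ.filter (fun q : Fin n × Fin n => q.1 < q.2), (y q.1 - y q.2)

lemma vandermondeProd_eq_one {n : ℕ} (hn : n ≤ 1) (y : Fin n → R) : vandermondeProd y = 1 :=
  prod_eq_one fun q hq => by
    have := Fin.lt_def.1 (mem_filter.1 hq).2
    omega

lemma det_vandermonde_sq {n : ℕ} (y : Fin n → R) :
    (vandermonde y).det ^ 2 = vandermondeProd y ^ 2 := by
  have h : (vandermonde y).det =
      ∏ q ∈ univ.filter (fun q : Fin n × Fin n => q.1 < q.2), -(y q.1 - y q.2) := by
    rw [det_vandermonde, ← prod_finset_product'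
      (univ.filter fun q : Fin n × Fin n => q.1 < q.2) univ (fun i => Ioi i) (by simp)]
    simp
  rw [h, prod_neg, mul_pow, ← pow_mul, pow_mul', neg_one_sq, one_pow, one_mul, vandermondeProd]

lemma vandermondeProd_comp_succAbove {n : ℕ} (y : Fin (n + 1) → R) (p : Fin (n + 1)) :
    vandermondeProd (y ∘ p.succAbove) =
      ∏ q ∈ univ.filter (fun q : Fin (n + 1) × Fin (n + 1) => q.1 < q.2 ∧ q.1 ≠ p ∧ q.2 ≠ p),
        (y q.1 - y q.2) := by
  refine prod_nbij (fun q => (p.succAbove q.1, p.succAbove q.2)) ?_ ?_ ?_ (fun _ _ => rfl)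
  · rintro ⟨a, b⟩ h
    simp only [mem_filter, mem_univ, true_and] at h ⊢
    exact ⟨Fin.strictMono_succAbove p h, Fin.succAbove_ne p a, Fin.succAbove_ne p b⟩
  · rintro ⟨a, b⟩ - ⟨a', b'⟩ - h
    simp only [Prod.mk.injEq, Fin.succAbove_right_inj] at h ⊢
    exact h
  · rintro ⟨i, j⟩ h
    simp only [coe_filter, Set.mem_ofPred_eq, mem_univ, true_and] at h
    obtain ⟨hij, hi, hj⟩ := h
    obtain ⟨a, rfl⟩ := Fin.exists_succAbove_eq hi
    obtain ⟨b, rfl⟩ := Fin.exists_succAbove_eq hj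
    exact ⟨(a, b), by simpa using hij, rfl⟩

/-- Each pair `i < j` is missed by exactly the two deletions `p = i` and `p = j`. -/
lemma sq_mul_prod_vandermondeProd_comp_succAbove {n : ℕ} (y : Fin (n + 1) → R) :
    vandermondeProd y ^ 2 * ∏ p : Fin (n + 1), vandermondeProd (y ∘ p.succAbove) =
      vandermondeProd y ^ (n + 1) := by
  simp_rw [vandermondeProd_comp_succAbove]
  rw [prod_comm' (t' := univ.filter (fun q : Fin (n + 1) × Fin (n + 1) => q.1 < q.2))
    (s' := fun q => ({q.1, q.2} : Finset (Fin (n + 1)))ᶜ) (by aesop)]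
  simp only [prod_const, vandermondeProd, ← prod_pow, ← prod_mul_distrib, ← pow_add]
  refine prod_congr rfl fun q hq => ?_
  have hlt := Fin.lt_def.1 (mem_filter.1 hq).2
  rw [card_compl, card_pair (Fin.ne_of_lt (mem_filter.1 hq).2), Fintype.card_fin]
  congr 1
  omega

end Vandermonde

abbrev Staircase (n : ℕ) : Type := ∀ i : Fin n, Fin (n - (i : ℕ))

lemma card_staircase (n : ℕ) : Fintype.card (Staircase n) = n ! := by
  rw [Fintype.card_pi]
  simp only [Fintype.card_fin]
  rw [Fin.prod_univ_eq_prod_range (fun i => n - i) n, ← prod_range_reflect (fun j => n - j) n,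
    ← prod_range_add_one_eq_factorial]
  exact prod_congr rfl fun i hi => by
    simp only [mem_range] at hi
    omega

def consStaircaseEquiv (n : ℕ) : Fin (n + 1) × Staircase n ≃ Staircase (n + 1) :=
  (prodCongr (finCongr (by simp))
    (piCongrRight fun i : Fin n => finCongr (by simp [Fin.val_succ]))).trans
    (Fin.consEquiv fun i : Fin (n + 1) => Fin (n + 1 - (i : ℕ)))

@[simp] lemma consStaircaseEquiv_apply_zero (n : ℕ) (k : Fin (n + 1)) (J : Staircase n) :
    (consStaircaseEquiv n (k, J) 0 : ℕ) = k := by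
  simp [consStaircaseEquiv, Fin.consEquiv]
  rfl

@[simp] lemma consStaircaseEquiv_apply_succ (n : ℕ) (k : Fin (n + 1)) (J : Staircase n)
    (i : Fin n) : (consStaircaseEquiv n (k, J) i.succ : ℕ) = J i := by
  simp [consStaircaseEquiv, Fin.consEquiv]
  rfl

/-- `permSuccEquiv n (p, τ)` sends `0 ↦ p` and `i + 1 ↦ p.succAbove (τ i)`. -/
def permSuccEquiv (n : ℕ) : Fin (n + 1) × Perm (Fin n) ≃ Perm (Fin (n + 1)) :=
  Equiv.ofBijective
    (fun pτ => (finSuccEquiv n).trans ((optionCongr pτ.2).trans (finSuccEquiv' pτ.1).symm)) <| by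
    rw [Fintype.bijective_iff_injective_and_card]
    refine ⟨fun ⟨p, τ⟩ ⟨p', τ'⟩ h => ?_, by simp [Fintype.card_perm, Nat.factorial_succ]⟩
    have hp : p = p' := by simpa using congr($h 0)
    subst hp
    have hτ : τ = τ' := Equiv.ext fun i => by simpa using congr($h i.succ)
    rw [hτ]

@[simp] lemma permSuccEquiv_apply_zero (n : ℕ) (p : Fin (n + 1)) (τ : Perm (Fin n)) :
    permSuccEquiv n (p, τ) 0 = p := by
  simp [permSuccEquiv]

@[simp] lemma permSuccEquiv_apply_succ (n : ℕ) (p : Fin (n + 1)) (τ : Perm (Fin n))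
    (i : Fin n) :
    permSuccEquiv n (p, τ) i.succ = p.succAbove (τ i) := by
  simp [permSuccEquiv]

def Staircase.succEquiv {n : ℕ} (e : Perm (Fin n) ≃ Staircase n) :
    Perm (Fin (n + 1)) ≃ Staircase (n + 1) :=
  (permSuccEquiv n).symm.trans ((prodCongr (Equiv.refl _) e).trans (consStaircaseEquiv n))

@[simp] lemma Staircase.succEquiv_permSuccEquiv {n : ℕ} (e : Perm (Fin n) ≃ Staircase n)
    (k : Fin (n + 1)) (ρ : Perm (Fin n)) :
    Staircase.succEquiv e (permSuccEquiv n (k, ρ)) = consStaircaseEquiv n (k, e ρ) := by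
  simp [Staircase.succEquiv]

section MonomialMatrix

variable {R : Type*} [CommRing R]

lemma cast_sign_sq {α : Type*} [DecidableEq α] [Fintype α] (σ : Perm α) :
    ((Perm.sign σ : ℤ) : R) ^ 2 = 1 := by
  rw [← Int.cast_pow, ← Units.val_pow_eq_pow_val, Int.units_sq, Units.val_one, Int.cast_one]

def monomialMatrix {n : ℕ} (y : Fin n → R) (e : Perm (Fin n) ≃ Staircase n) :
    Matrix (Perm (Fin n)) (Perm (Fin n)) R :=
  of fun σ τ => ∏ i, y (σ i) ^ (e τ i : ℕ)

lemma det_monomialMatrix_sq_congr {n : ℕ} (y : Fin n → R)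
    (e e' : Perm (Fin n) ≃ Staircase n) :
    (monomialMatrix y e).det ^ 2 = (monomialMatrix y e').det ^ 2 := by
  have h : monomialMatrix y e = (monomialMatrix y e').submatrix id (e.trans e'.symm) := by
    ext σ τ
    simp [monomialMatrix]
  rw [h, det_permute', mul_pow, cast_sign_sq, one_mul]

/-- At `σ = permSuccEquiv n (p, τ)` and `I = (k, e ρ)` the entry is `y p ^ k` times the
`(τ, ρ)` entry of the monomial matrix of `y ∘ p.succAbove`. -/
lemma monomialMatrix_succEquiv_submatrix {n : ℕ} (y : Fin (n + 1) → R)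
    (e : Perm (Fin n) ≃ Staircase n) :
    (monomialMatrix y (Staircase.succEquiv e)).submatrix (permSuccEquiv n) (permSuccEquiv n) =
      (blockDiagonal fun p => monomialMatrix (y ∘ p.succAbove) e).submatrix
          (prodComm _ _) (prodComm _ _) * (vandermonde y ⊗ₖ 1) := by
  ext ⟨p, τ⟩ ⟨k, ρ⟩
  rw [mul_apply, Fintype.sum_prod_type,
    sum_eq_single p (fun q _ hq => by simp [blockDiagonal_apply, hq.symm]) (by simp),
    sum_eq_single ρ (fun b _ hb => by simp [hb]) (by simp)]
  simp [monomialMatrix, Fin.prod_univ_succ, vandermonde, mul_comm]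

lemma det_monomialMatrix_succEquiv {n : ℕ} (y : Fin (n + 1) → R)
    (e : Perm (Fin n) ≃ Staircase n) :
    (monomialMatrix y (Staircase.succEquiv e)).det =
      (∏ p : Fin (n + 1), (monomialMatrix (y ∘ p.succAbove) e).det) *
        (vandermonde y).det ^ n ! := by
  rw [← det_submatrix_equiv_self (permSuccEquiv n), monomialMatrix_succEquiv_submatrix, det_mul,
    det_submatrix_equiv_self, det_blockDiagonal, det_kronecker, det_one, one_pow, mul_one,
    Fintype.card_perm, Fintype.card_fin]

theorem det_monomialMatrix_sq {n : ℕ} (y : Fin n → R) (e : Perm (Fin n) ≃ Staircase n) :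
    (monomialMatrix y e).det ^ 2 = vandermondeProd y ^ n ! := by
  induction n with
  | zero => simp [monomialMatrix, vandermondeProd_eq_one]
  | succ n ih =>
    let e' : Perm (Fin n) ≃ Staircase n :=
      Fintype.equivOfCardEq (by rw [card_staircase, Fintype.card_perm, Fintype.card_fin])
    rw [det_monomialMatrix_sq_congr y e (Staircase.succEquiv e'), det_monomialMatrix_succEquiv,
      mul_pow, ← prod_pow, ← pow_mul, mul_comm n ! 2, pow_mul, det_vandermonde_sq]
    simp only [ih, prod_pow, ← mul_pow]
    rw [mul_comm, sq_mul_prod_vandermondeProd_comp_succAbove, ← pow_mul, Nat.factorial_succ]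

end MonomialMatrix

lemma Delta_eq_algebraMap_vandermondeProd (r : ℕ) :
    Delta r = algebraMap _ (RatFld r) (vandermondeProd (X : Fin r → MvPolynomial (Fin r) ℚ)) :=
  rfl

lemma Delta_ne_zero (r : ℕ) : Delta r ≠ 0 := by
  rw [Delta_eq_algebraMap_vandermondeProd, map_ne_zero_iff _ (IsFractionRing.injective _ _),
    vandermondeProd, prod_ne_zero_iff]
  exact fun q hq => sub_ne_zero.2 fun h => (mem_filter.1 hq).2.ne (X_injective h)

lemma inv_Delta_pow_half_sq (r : ℕ) :
    ((Delta r)⁻¹ ^ (r ! / 2)) ^ 2 = (Delta r)⁻¹ ^ r ! := by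
  rcases le_or_gt 2 r with hr | hr
  · rw [← pow_mul, Nat.div_mul_cancel (Nat.dvd_factorial two_pos hr)]
  · simp [Delta_eq_algebraMap_vandermondeProd, vandermondeProd_eq_one (Nat.le_of_lt_succ hr)]

lemma det_bEntry_sq (r : ℕ) (e : Perm (Fin r) ≃ Staircase r) :
    (of fun σ τ => bEntry r σ (e τ)).det ^ 2 = (Delta r)⁻¹ ^ r ! := by
  have hB : (of fun σ τ => bEntry r σ (e τ)) = of fun σ τ =>
      ((Perm.sign σ : ℤ) * (Delta r)⁻¹ : RatFld r) *
        (algebraMap (MvPolynomial (Fin r) ℚ) (RatFld r)).mapMatrix (monomialMatrix X e) σ τ := by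
    ext σ τ
    simp only [bEntry, monomialMatrix, of_apply, RingHom.mapMatrix_apply, map_apply]
    ring
  rw [hB, det_mul_column, ← RingHom.map_det, mul_pow, ← map_pow, det_monomialMatrix_sq,
    map_pow, ← Delta_eq_algebraMap_vandermondeProd, ← prod_pow]
  simp only [mul_pow, cast_sign_sq, one_mul, prod_const, card_univ, Fintype.card_perm,
    Fintype.card_fin]
  rw [← mul_pow, sq, mul_assoc, inv_mul_cancel₀ (Delta_ne_zero r), mul_one]

/-- **Determinant of the monomial matrix `B`.**
The `r! × r!` matrix with rows indexed by `σ ∈ S_r`, columns indexed (via any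
bijection `e`) by exponent tuples `(n_1,…,n_r)` with `0 ≤ n_i ≤ r - i`, and
entries `b_{σ,I} = (-1)^{ℓ(σ)} σ(x^I)/Δ(x)`, has determinant `± Δ(x)^{-r!/2}`
(the sign depending on the chosen ordering of rows and columns). -/
theorem stmt5 (r : ℕ)
    (e : Equiv.Perm (Fin r) ≃ (∀ i : Fin r, Fin (r - (i : ℕ)))) :
    Matrix.det (Matrix.of fun σ τ : Equiv.Perm (Fin r) => bEntry r σ (e τ)) =
        (Delta r)⁻¹ ^ (Nat.factorial r / 2) ∨
      Matrix.det (Matrix.of fun σ τ : Equiv.Perm (Fin r) => bEntry r σ (e τ)) =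
        -((Delta r)⁻¹ ^ (Nat.factorial r / 2)) :=
  sq_eq_sq_iff_eq_or_eq_neg.1 ((det_bEntry_sq r e).trans (inv_Delta_pow_half_sq r).symm)

end
end

section
/- For A_{K,r} the image of the weighted symmetrization operator Ψ'_r(P) = Δ(x)^{-1} Σ_{σ∈S_r} (−1)^{ℓ(σ)} σ( ∏_{i<j, γ∈Γ}(x_i − γx_j) · P ), every element of A_{K,r} vanishes on the 'wheel' variety Z_r = ∪_α { S_r-orbits of (x_1,…,x_r) : x_1 = α x_2, x_2 = ᾱ x_3 }, where α runs over the Weil numbers. -/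
/-!
Each summand of the symmetrization vanishes separately. Put `a = σ⁻¹ i`, `b = σ⁻¹ j`,
`c = σ⁻¹ k`. If `a < b` the factor `x_a - α_l x_b` vanishes, if `b < c` the factor
`x_b - ᾱ_l x_c` vanishes, and otherwise `c < a`, where `x_c - q⁻¹ x_a` vanishes because
`z_i = α_l ᾱ_l z_k = q z_k`.
-/

open Finset

/-- `∏_{γ ∈ Γ} (x - γ y)` for `Γ = {α_1, ᾱ_1, …, α_g, ᾱ_g, q⁻¹}`. -/
def wheelKernel {K : Type*} [Field K] {g : ℕ} (q : K) (α αbar : Fin g → K) (x y : K) : K :=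
  (x - q⁻¹ * y) * ∏ t : Fin g, ((x - α t * y) * (x - αbar t * y))

section wheelKernel

variable {K : Type*} [Field K] {g : ℕ} {q : K} {α αbar : Fin g → K} {x y : K}

theorem wheelKernel_eq_zero_of_eq_alpha_mul {l : Fin g} (h : x = α l * y) :
    wheelKernel q α αbar x y = 0 :=
  mul_eq_zero_of_right _ <|
    prod_eq_zero (mem_univ l) (mul_eq_zero_of_left (sub_eq_zero.mpr h) _)

theorem wheelKernel_eq_zero_of_eq_alphabar_mul {l : Fin g} (h : x = αbar l * y) :
    wheelKernel q α αbar x y = 0 :=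
  mul_eq_zero_of_right _ <|
    prod_eq_zero (mem_univ l) (mul_eq_zero_of_right _ (sub_eq_zero.mpr h))

theorem wheelKernel_eq_zero_of_mul_eq (hq : q ≠ 0) (h : q * x = y) :
    wheelKernel q α αbar x y = 0 :=
  mul_eq_zero_of_left (by rw [← h, inv_mul_cancel_left₀ hq, sub_self]) _

end wheelKernel

/-- Whatever the relative order of `a, b, c`, one of the edges `(a, b)`, `(b, c)`, `(c, a)`
is increasing. -/
theorem Finset.prod_filter_lt_eq_zero_of_cycle {ι M : Type*} [Fintype ι] [LinearOrder ι]
    [CommMonoidWithZero M] (F : ι → ι → M) {a b c : ι} (hab : a ≠ b) (hbc : b ≠ c)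
    (h₁ : F a b = 0) (h₂ : F b c = 0) (h₃ : F c a = 0) :
    ∏ p ∈ univ.filter (fun p : ι × ι => p.1 < p.2), F p.1 p.2 = 0 := by
  rcases hab.lt_or_gt with hab | hba
  · exact prod_eq_zero (i := (a, b)) (by simpa using hab) h₁
  rcases hbc.lt_or_gt with hbc | hcb
  · exact prod_eq_zero (i := (b, c)) (by simpa using hbc) h₂
  · exact prod_eq_zero (i := (c, a)) (by simpa using hcb.trans hba) h₃

theorem stmt8_general (g r : ℕ) (q : ℂ) (hq : q ≠ 0)
    (α αbar : Fin g → ℂ) (hweil : ∀ l, α l * αbar l = q)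
    (P : (Fin r → ℂ) → ℂ) (z : Fin r → ℂ)
    (i j k : Fin r) (hij : i ≠ j) (hjk : j ≠ k)
    (l : Fin g) (h1 : z i = α l * z j) (h2 : z j = αbar l * z k) :
    (∑ σ : Equiv.Perm (Fin r), ((Equiv.Perm.sign σ : ℤ) : ℂ) *
        (∏ p ∈ Finset.univ.filter (fun p : Fin r × Fin r => p.1 < p.2),
          ((z (σ p.1) - q⁻¹ * z (σ p.2)) *
            ∏ t : Fin g, ((z (σ p.1) - α t * z (σ p.2)) *
              (z (σ p.1) - αbar t * z (σ p.2))))) * P (z ∘ σ)) /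
      (∏ p ∈ Finset.univ.filter (fun p : Fin r × Fin r => p.1 < p.2),
        (z p.1 - z p.2)) = 0 := by
  have hki : q * z k = z i := by rw [h1, h2, ← mul_assoc, hweil]
  refine div_eq_zero_iff.mpr <| Or.inl <| sum_eq_zero fun σ _ => ?_
  have hvanish := prod_filter_lt_eq_zero_of_cycle
    (fun a b => wheelKernel q α αbar (z (σ a)) (z (σ b)))
    (a := σ.symm i) (b := σ.symm j) (c := σ.symm k)
    (σ.symm.injective.ne hij) (σ.symm.injective.ne hjk)
    (by simpa using wheelKernel_eq_zero_of_eq_alpha_mul h1)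
    (by simpa using wheelKernel_eq_zero_of_eq_alphabar_mul h2)
    (by simpa using wheelKernel_eq_zero_of_mul_eq hq hki)
  exact mul_eq_zero_of_left (mul_eq_zero_of_right _ hvanish) _

/-- **Vanishing of the image of the weighted symmetrization on the wheel
variety.**  With `Γ = {α_1, ᾱ_1, …, α_g, ᾱ_g, q⁻¹}`,
`Ψ'_r(P) = Δ(x)⁻¹ Σ_σ (-1)^{ℓ(σ)} σ(∏_{i<j, γ∈Γ} (x_i - γ x_j) · P)` vanishes
at every point `z` of the wheel variety: whenever there are distinct indices
`i, j, k` and a Weil number `α_l` with `z_i = α_l z_j` and `z_j = ᾱ_l z_k`. -/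
theorem stmt8 (g r : ℕ) (q : ℂ) (hq : q ≠ 0)
    (α αbar : Fin g → ℂ) (hweil : ∀ l, α l * αbar l = q)
    (hα0 : ∀ l, α l ≠ 0) (hαbar0 : ∀ l, αbar l ≠ 0)
    (P : (Fin r → ℂ) → ℂ) (z : Fin r → ℂ)
    (i j k : Fin r) (hij : i ≠ j) (hjk : j ≠ k) (hik : i ≠ k)
    (l : Fin g) (h1 : z i = α l * z j) (h2 : z j = αbar l * z k) :
    (∑ σ : Equiv.Perm (Fin r), ((Equiv.Perm.sign σ : ℤ) : ℂ) *
        (∏ p ∈ Finset.univ.filter (fun p : Fin r × Fin r => p.1 < p.2),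
          ((z (σ p.1) - q⁻¹ * z (σ p.2)) *
            ∏ t : Fin g, ((z (σ p.1) - α t * z (σ p.2)) *
              (z (σ p.1) - αbar t * z (σ p.2))))) * P (z ∘ σ)) /
      (∏ p ∈ Finset.univ.filter (fun p : Fin r × Fin r => p.1 < p.2),
        (z p.1 - z p.2)) = 0 :=
  stmt8_general g r q hq α αbar hweil P z i j k hij hjk l h1 h2
end

section
/- For the elements θ_{0,d} defined from T_{0,d} by the generating-series relation 1 + Σ_{d≥1} θ_{0,d} s^d = exp((v^{-1}−v) Σ_{d≥1} T_{0,d} s^d), if each T_{0,d} is a primitive-type element with coproduct Δ̃(T_{0,d}) = T_{0,d}⊗1 + κ_{0,d}⊗T_{0,d} in a bialgebra where κ_{0,d}κ_{0,e} = κ_{0,d+e} are grouplike central elements, then Δ̃(θ_{0,d}) = Σ_{l=0}^d θ_{0,l} κ_{0,d−l} ⊗ θ_{0,d−l}. -/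
/-!
With `c = v⁻¹ - v`, the series `θ(s) = exp (c T(s))` is characterised by the linear differential
equation `θ' = c T' θ` together with `θ(0) = 1`. Applying the algebra map `Δ`, the series `Δθ`
solves the equation driven by `c ΔT = c (T ⊗ 1) + c ∑ κ_d ⊗ T_d s^d`. The right-hand side of the
theorem is the product of `θ(s) ⊗ 1`, which solves the equation driven by `c (T ⊗ 1)`, and of
`∑ κ_d ⊗ θ_d s^d`, which solves the one driven by `c ∑ κ_d ⊗ T_d s^d` because `κ` is multiplicative.
By the Leibniz rule the product solves the equation driven by the sum, so both sides agree.
-/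

open TensorProduct Finset PowerSeries

namespace PowerSeries

variable {B : Type*} [CommSemiring B] (a f : ℕ → B)

theorem coeff_derivative_mk (n : ℕ) : coeff n (d⁄dX B (mk f)) = (n + 1) • f (n + 1) := by
  rw [coeff_derivative, coeff_mk, nsmul_eq_mul, mul_comm, Nat.cast_succ]

theorem coeff_derivative_mk_mul_mk (n : ℕ) :
    coeff n (d⁄dX B (mk a) * mk f) = ∑ k ∈ Icc 1 (n + 1), k • (a k * f (n + 1 - k)) := by
  rw [coeff_mul, Nat.sum_antidiagonal_eq_sum_range_succ
      (fun i j => coeff i (d⁄dX B (mk a)) * coeff j (mk f)),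
    ← Ico_add_one_right_eq_Icc, sum_Ico_eq_sum_range, Nat.add_sub_cancel]
  refine sum_congr rfl fun k _ => ?_
  rw [coeff_derivative_mk, coeff_mk, add_comm 1 k, Nat.add_sub_add_right, smul_mul_assoc]

end PowerSeries

/-- `f` is the coefficient sequence of `f 0 * exp (∑ k ≥ 1, a k s^k)`, expressed through the
coefficients of `f' = (∑ k ≥ 1, k a_k s^(k-1)) f`. -/
def IsExpSeq {B : Type*} [CommSemiring B] (a f : ℕ → B) : Prop :=
  ∀ d, 1 ≤ d → d • f d = ∑ k ∈ Icc 1 d, k • (a k * f (d - k))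

namespace IsExpSeq

variable {B : Type*} [CommSemiring B] {a b f g : ℕ → B}

theorem iff_derivative : IsExpSeq a f ↔ d⁄dX B (mk f) = d⁄dX B (mk a) * mk f := by
  simp only [PowerSeries.ext_iff, coeff_derivative_mk, coeff_derivative_mk_mul_mk]
  exact ⟨fun h n => h (n + 1) n.succ_pos, fun h d hd => by
    obtain ⟨n, rfl⟩ := Nat.exists_eq_add_of_le' hd
    exact h n⟩

theorem convolution (hf : IsExpSeq a f) (hg : IsExpSeq b g) :
    IsExpSeq (a + b) fun d => ∑ l ∈ range (d + 1), f l * g (d - l) := by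
  have hmul : mk (fun d => ∑ l ∈ range (d + 1), f l * g (d - l)) = mk f * mk g := by
    ext n
    rw [coeff_mk, coeff_mul,
      Nat.sum_antidiagonal_eq_sum_range_succ (fun i j => coeff i (mk f) * coeff j (mk g))]
    simp only [coeff_mk]
  have hadd : mk (a + b) = mk a + mk b := by
    ext n
    simp
  rw [iff_derivative] at hf hg ⊢
  rw [hmul, hadd, Derivation.leibniz, map_add, hf, hg, smul_eq_mul, smul_eq_mul]
  ring

theorem map {C F : Type*} [CommSemiring C] [FunLike F B C] [RingHomClass F B C] (φ : F)
    (hf : IsExpSeq a f) : IsExpSeq (fun k => φ (a k)) fun k => φ (f k) := by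
  intro d hd
  simp only [← map_nsmul, ← map_mul, ← map_sum, hf d hd]

theorem twist (hf : IsExpSeq a f) (u : ℕ → B) (hu : ∀ k l, u (k + l) = u k * u l) :
    IsExpSeq (fun k => u k * a k) fun k => u k * f k := by
  intro d hd
  dsimp only
  rw [← mul_smul_comm, hf d hd, mul_sum]
  refine sum_congr rfl fun k hk => ?_
  rw [← Nat.add_sub_of_le (mem_Icc.mp hk).2, hu, Nat.add_sub_cancel_left]
  simp only [nsmul_eq_mul]
  ring

theorem congr_left (hf : IsExpSeq a f) (hab : ∀ k, 1 ≤ k → a k = b k) : IsExpSeq b f := by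
  intro d hd
  rw [hf d hd]
  exact sum_congr rfl fun k hk => by rw [hab k (mem_Icc.mp hk).1]

theorem unique [IsAddTorsionFree B] (hf : IsExpSeq a f) (hg : IsExpSeq a g)
    (h0 : f 0 = g 0) : f = g := by
  funext d
  induction d using Nat.strong_induction_on with
  | _ d ih =>
    rcases Nat.eq_zero_or_pos d with rfl | hd
    · exact h0
    refine nsmul_right_injective hd.ne' ?_
    simp only [hf d hd, hg d hd]
    exact sum_congr rfl fun k hk => by rw [ih (d - k) (by grind)]

end IsExpSeq

theorem stmt10_general (A : Type*) [CommRing A] [Algebra ℂ A]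
    (Δ : A →ₐ[ℂ] A ⊗[ℂ] A) (v : ℂ)
    (κ T θ : ℕ → A)
    (hκmul : ∀ d e : ℕ, κ d * κ e = κ (d + e)) (hκ0 : κ 0 = 1)
    (hT : ∀ d : ℕ, 1 ≤ d → Δ (T d) = T d ⊗ₜ[ℂ] 1 + κ d ⊗ₜ[ℂ] T d)
    (hθ0 : θ 0 = 1)
    (hθrec : ∀ d : ℕ, 1 ≤ d →
      (d : ℂ) • θ d = (v⁻¹ - v) • ∑ k ∈ Finset.Icc 1 d, (k : ℂ) • (T k * θ (d - k))) :
    ∀ d : ℕ, Δ (θ d) =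
      ∑ l ∈ Finset.range (d + 1), (θ l * κ (d - l)) ⊗ₜ[ℂ] θ (d - l) := by
  have : IsAddTorsionFree (A ⊗[ℂ] A) := .of_isTorsionFree ℂ _
  have hθ : IsExpSeq (fun k => (v⁻¹ - v) • T k) θ := fun d hd => by
    rw [← Nat.cast_smul_eq_nsmul ℂ, hθrec d hd, smul_sum]
    refine sum_congr rfl fun k _ => ?_
    rw [← Nat.cast_smul_eq_nsmul ℂ, smul_mul_assoc, smul_comm]
  have hleft := hθ.map (Algebra.TensorProduct.includeLeft (R := ℂ) (S := ℂ) (B := A))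
  have hright := (hθ.map (Algebra.TensorProduct.includeRight (R := ℂ) (A := A))).twist
    (fun k => κ k ⊗ₜ[ℂ] 1) fun k l => by rw [Algebra.TensorProduct.tmul_mul_tmul, hκmul, one_mul]
  have hprod := (hleft.convolution hright).congr_left (b := fun k => Δ ((v⁻¹ - v) • T k))
    fun k hk => by simp [hT k hk, Algebra.TensorProduct.tmul_mul_tmul, TensorProduct.smul_tmul']
  have hΔθ := (hθ.map Δ).unique hprod (by simp [hθ0, hκ0, Algebra.TensorProduct.one_def])
  intro d
  rw [congrFun hΔθ d]
  simp [Algebra.TensorProduct.tmul_mul_tmul]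

/-- **Coproduct of the elements `θ_{0,d}`.**
In a (graded, topological) bialgebra whose relevant elements commute, suppose
`κ_{0,d}` are grouplike central elements with `κ_{0,d} κ_{0,e} = κ_{0,d+e}`,
`κ_{0,0} = 1`, and `Δ̃(T_{0,d}) = T_{0,d} ⊗ 1 + κ_{0,d} ⊗ T_{0,d}` for `d ≥ 1`.
Define `θ_{0,d}` by `1 + Σ_{d≥1} θ_{0,d} s^d = exp((v⁻¹ - v) Σ_{d≥1} T_{0,d} s^d)`
(encoded here by the equivalent coefficient recursion, obtained by logarithmic
differentiation: `d θ_d = (v⁻¹ - v) Σ_{k=1}^d k T_k θ_{d-k}` with `θ_0 = 1`).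
Then `Δ̃(θ_{0,d}) = Σ_{l=0}^d θ_{0,l} κ_{0,d-l} ⊗ θ_{0,d-l}`. -/
theorem stmt10 (A : Type*) [CommRing A] [Algebra ℂ A]
    (Δ : A →ₐ[ℂ] A ⊗[ℂ] A) (v : ℂ) (hv : v ≠ 0)
    (κ T θ : ℕ → A)
    (hκmul : ∀ d e : ℕ, κ d * κ e = κ (d + e)) (hκ0 : κ 0 = 1)
    (hκgrp : ∀ d : ℕ, Δ (κ d) = κ d ⊗ₜ[ℂ] κ d)
    (hT : ∀ d : ℕ, 1 ≤ d → Δ (T d) = T d ⊗ₜ[ℂ] 1 + κ d ⊗ₜ[ℂ] T d)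
    (hθ0 : θ 0 = 1)
    (hθrec : ∀ d : ℕ, 1 ≤ d →
      (d : ℂ) • θ d = (v⁻¹ - v) • ∑ k ∈ Finset.Icc 1 d, (k : ℂ) • (T k * θ (d - k))) :
    ∀ d : ℕ, Δ (θ d) =
      ∑ l ∈ Finset.range (d + 1), (θ l * κ (d - l)) ⊗ₜ[ℂ] θ (d - l) :=
  stmt10_general A Δ v κ T θ hκmul hκ0 hT hθ0 hθrec
end

section
/- The q-symmetrization identity Σ_{σ∈S_r} σ( ∏_{i<j} (x_i − q x_j)/(x_i − x_j) ) = [r]!_q, where [r]!_q = ∏_{s=1}^r (1+q+⋯+q^{s-1}). -/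
/-!
Fixing `σ 0 = p` splits `S_{r+1}` into cosets of `S_r`. The factors of the product that involve
position `0` give `A_p = ∏_{b ≠ p} (x_p - q x_b) / (x_p - x_b)`, and the remaining factors form the
same symmetrization for the `r` variables other than `x_p`. By induction the identity reduces to
`∑_p A_p = 1 + q + ⋯ + q^r`. For that, interpolate `∏_j (X - q x_j) - ∏_j (X - x_j)`, a polynomial
of degree `≤ r`, at the nodes `x_j` and evaluate at `0`: when no `x_j` vanishes this gives
`(1 - q) ∑_p A_p = 1 - q^(r+1)`. A vanishing `x_m` contributes `A_m = q^r` and drops out of the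
other `A_p`.
-/

open Finset Polynomial Lagrange Equiv

section LagrangeSum

variable {K ι : Type*} [Field K] [DecidableEq ι]

theorem one_sub_mul_sum_prod_div_of_ne_zero (q : K) {s : Finset ι} {v : ι → K}
    (hv : Set.InjOn v s) (h0 : ∀ k ∈ s, v k ≠ 0) :
    (1 - q) * ∑ k ∈ s, ∏ j ∈ s.erase k, (v k - q * v j) / (v k - v j) = 1 - q ^ #s := by
  set f := nodal s (fun j => q * v j) - nodal s v
  have hdeg : f.degree < #s := by
    have := degree_sub_lt_left (p := nodal s (fun j => q * v j)) (q := nodal s v)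
      (by rw [degree_nodal, degree_nodal]) nodal_ne_zero
      (by rw [nodal_monic.leadingCoeff, nodal_monic.leadingCoeff])
    rwa [degree_nodal] at this
  have hN : eval 0 (nodal s v) ≠ 0 := by
    rw [eval_nodal, prod_ne_zero_iff]
    exact fun k hk => by simpa using h0 k hk
  have key := congrArg (eval 0) (eq_interpolate hv hdeg)
  rw [eval_interpolate_not_at_node _ fun k hk => (h0 k hk).symm] at key
  have hf_zero : eval 0 f = eval 0 (nodal s v) * (q ^ #s - 1) := by
    have : ∏ j ∈ s, (0 - q * v j) = ∏ j ∈ s, q * (0 - v j) := prod_congr rfl fun _ _ => by ring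
    rw [eval_sub, eval_nodal, eval_nodal, this, prod_mul_distrib, prod_const]
    ring
  have hterm : ∀ k ∈ s, nodalWeight s v k * (0 - v k)⁻¹ * eval (v k) f
      = -(1 - q) * ∏ j ∈ s.erase k, (v k - q * v j) / (v k - v j) := by
    intro k hk
    rw [eval_sub, eval_nodal_at_node hk, sub_zero, eval_nodal, ← mul_prod_erase _ _ hk,
      nodalWeight]
    simp only [div_eq_mul_inv, prod_mul_distrib]
    field_simp [h0 k hk]
    ring
  rw [hf_zero, sum_congr rfl hterm, ← mul_sum] at key
  linear_combination mul_left_cancel₀ hN key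

theorem sum_prod_div_eq_pow_add_sum_erase (q : K) {s : Finset ι} {v : ι → K}
    (hv : Set.InjOn v s) {m : ι} (hm : m ∈ s) (hm0 : v m = 0) :
    ∑ k ∈ s, ∏ j ∈ s.erase k, (v k - q * v j) / (v k - v j)
      = q ^ (#s - 1) +
        ∑ k ∈ s.erase m, ∏ j ∈ (s.erase m).erase k, (v k - q * v j) / (v k - v j) := by
  have hne : ∀ k ∈ s.erase m, v k ≠ 0 := fun k hk =>
    hm0 ▸ hv.ne (mem_of_mem_erase hk) hm (ne_of_mem_erase hk)
  rw [← add_sum_erase _ _ hm, ← card_erase_of_mem hm, ← prod_const]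
  congr 1
  · refine prod_congr rfl fun j hj => ?_
    rw [hm0, zero_sub, zero_sub, neg_div_neg_eq, mul_div_cancel_right₀ _ (hne j hj)]
  · refine sum_congr rfl fun k hk => ?_
    rw [← mul_prod_erase _ _ (mem_erase.2 ⟨(ne_of_mem_erase hk).symm, hm⟩), erase_right_comm,
      hm0, mul_zero, sub_zero, div_self (hne k hk), one_mul]

theorem one_sub_mul_sum_prod_div (q : K) {s : Finset ι} {v : ι → K} (hv : Set.InjOn v s) :
    (1 - q) * ∑ k ∈ s, ∏ j ∈ s.erase k, (v k - q * v j) / (v k - v j) = 1 - q ^ #s := by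
  by_cases h0 : ∃ m ∈ s, v m = 0
  · obtain ⟨m, hm, hm0⟩ := h0
    have hne : ∀ k ∈ s.erase m, v k ≠ 0 := fun k hk =>
      hm0 ▸ hv.ne (mem_of_mem_erase hk) hm (ne_of_mem_erase hk)
    obtain ⟨n, hn⟩ := Nat.exists_eq_add_one.2 (card_pos.2 ⟨m, hm⟩)
    rw [sum_prod_div_eq_pow_add_sum_erase q hv hm hm0, mul_add,
      one_sub_mul_sum_prod_div_of_ne_zero q (hv.mono (erase_subset m s)) hne,
      card_erase_of_mem hm, hn, Nat.add_sub_cancel, pow_succ]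
    ring
  · push Not at h0
    exact one_sub_mul_sum_prod_div_of_ne_zero q hv h0

theorem sum_prod_div_eq_geom_sum (q : K) {s : Finset ι} {v : ι → K} (hv : Set.InjOn v s) :
    ∑ k ∈ s, ∏ j ∈ s.erase k, (v k - q * v j) / (v k - v j) = ∑ t ∈ range #s, q ^ t := by
  by_cases hq : q = 1
  · subst hq
    have hone : ∀ k ∈ s, ∏ j ∈ s.erase k, (v k - 1 * v j) / (v k - v j) = 1 := fun k hk =>
      prod_eq_one fun j hj => by
        rw [one_mul, div_self <| sub_ne_zero.2 <|
          hv.ne hk (mem_of_mem_erase hj) (ne_of_mem_erase hj).symm]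
    rw [sum_congr rfl hone]
    simp
  · exact mul_left_cancel₀ (sub_ne_zero.2 (Ne.symm hq))
      ((one_sub_mul_sum_prod_div q hv).trans (mul_neg_geom_sum q #s).symm)

end LagrangeSum

theorem prod_filter_lt_eq_prod_prod_Ioi {M α : Type*} [CommMonoid M] [Fintype α] [LinearOrder α]
    [LocallyFiniteOrderTop α] (g : α → α → M) :
    ∏ p ∈ univ.filter (fun p : α × α => p.1 < p.2), g p.1 p.2 = ∏ i, ∏ j ∈ Ioi i, g i j := by
  rw [prod_filter, Fintype.prod_prod_type]
  simp [← prod_filter, filter_lt_eq_Ioi]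

section PermFin

variable {M : Type*} [CommMonoid M] {n : ℕ}

theorem Fin.prod_prod_Ioi_succ (g : Fin (n + 1) → Fin (n + 1) → M) :
    ∏ i, ∏ j ∈ Ioi i, g i j
      = (∏ j : Fin n, g 0 j.succ) * ∏ i : Fin n, ∏ j ∈ Ioi i, g i.succ j.succ := by
  simp_rw [Fin.prod_univ_succ, Fin.prod_Ioi_zero, Fin.prod_Ioi_succ]

theorem Fin.prod_erase_eq_prod_swap_succ (p : Fin (n + 1)) (f : Fin (n + 1) → M) :
    ∏ b ∈ univ.erase p, f b = ∏ j : Fin n, f (swap 0 p j.succ) := by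
  rw [← Fin.prod_Ioi_zero (f := fun b => f (swap 0 p b))]
  refine (prod_equiv (swap 0 p) (fun i => ?_) fun _ _ => rfl).symm
  simp [swap_apply_eq_iff]

theorem prod_prod_Ioi_decomposeFin_symm {α : Type*} (h : α → α → M) (x : Fin (n + 1) → α)
    (p : Fin (n + 1)) (e : Perm (Fin n)) :
    ∏ i, ∏ j ∈ Ioi i,
        h (x (Perm.decomposeFin.symm (p, e) i)) (x (Perm.decomposeFin.symm (p, e) j))
      = (∏ b ∈ univ.erase p, h (x p) (x b)) *
        ∏ i, ∏ j ∈ Ioi i, h (x (swap 0 p (e i).succ)) (x (swap 0 p (e j).succ)) := by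
  simp only [Fin.prod_prod_Ioi_succ, Perm.decomposeFin_symm_apply_zero,
    Perm.decomposeFin_symm_apply_succ, Fin.prod_erase_eq_prod_swap_succ p]
  rw [Equiv.prod_comp e fun j => h (x p) (x (swap 0 p j.succ))]

end PermFin

theorem sum_perm_prod_prod_Ioi_eq_prod_geom_sum {K : Type*} [Field K] (q : K) :
    ∀ {n : ℕ} (x : Fin n → K), Function.Injective x →
      ∑ σ : Perm (Fin n), ∏ i, ∏ j ∈ Ioi i, (x (σ i) - q * x (σ j)) / (x (σ i) - x (σ j))
        = ∏ s ∈ range n, ∑ t ∈ range (s + 1), q ^ t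
  | 0, _, _ => by simp
  | n + 1, x, hx => by
    rw [← Perm.decomposeFin.symm.sum_comp, Fintype.sum_prod_type]
    simp_rw [prod_prod_Ioi_decomposeFin_symm (fun a b => (a - q * b) / (a - b)), ← mul_sum]
    have hrest (p : Fin (n + 1)) := sum_perm_prod_prod_Ioi_eq_prod_geom_sum q
      (fun j => x (swap 0 p j.succ)) (hx.comp ((swap 0 p).injective.comp (Fin.succ_injective n)))
    simp only [hrest, ← sum_mul]
    rw [sum_prod_div_eq_geom_sum q hx.injOn, card_univ, Fintype.card_fin, prod_range_succ,
      mul_comm]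

/-- **The `q`-symmetrization identity** (Gindikin–Karpelevich/Macdonald):
`Σ_{σ∈S_r} σ( ∏_{i<j} (x_i - q x_j)/(x_i - x_j) ) = [r]!_q`, where
`[r]!_q = ∏_{s=1}^r (1 + q + ⋯ + q^{s-1})` (stated pointwise at any point with
pairwise distinct coordinates). -/
theorem stmt14 (r : ℕ) (q : ℂ) (x : Fin r → ℂ)
    (hx : ∀ i j : Fin r, i ≠ j → x i ≠ x j) :
    (∑ σ : Equiv.Perm (Fin r),
        ∏ p ∈ Finset.univ.filter (fun p : Fin r × Fin r => p.1 < p.2),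
          (x (σ p.1) - q * x (σ p.2)) / (x (σ p.1) - x (σ p.2))) =
      ∏ s ∈ Finset.range r, ∑ t ∈ Finset.range (s + 1), q ^ t := by
  rw [sum_congr rfl fun σ _ => prod_filter_lt_eq_prod_prod_Ioi fun i j =>
    (x (σ i) - q * x (σ j)) / (x (σ i) - x (σ j))]
  exact sum_perm_prod_prod_Ioi_eq_prod_geom_sum q x fun i j h => by_contra fun hij => hx i j hij h
end
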